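/- Along the diagonal, the symmetrized ARAP energy remains bounded as the singular values approach zero: with f^Sym_ARAP(σ₁,σ₂,σ₃) = (1/2)·∑ᵢ₌₁³ (σᵢ − 1)² + (1/2)·(σ₁σ₂σ₃)·∑ₖ₌₁³ (1/σₖ − 1)², one has f^Sym_ARAP(t,t,t) = (3/2)·(1 − t)²·(1 + t) for every t > 0, and therefore f^Sym_ARAP(t,t,t) tends to the finite limit 3/2 as t → 0⁺. Hence there is a path in the positive orthant approaching (0,0,0) along which the symmetrized ARAP energy density stays finite. -/

import Mathlib

/-- The symmetrized ARAP distortion in singular values (3D). -/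
noncomputable def fSymARAP3 (a b c : ℝ) : ℝ :=
  (1/2) * ((a - 1)^2 + (b - 1)^2 + (c - 1)^2) +
  (1/2) * (a * b * c) * ((1 / a - 1)^2 + (1 / b - 1)^2 + (1 / c - 1)^2)

/- The factor `t³` in front of the inverted part clears the poles, so the diagonal is a cubic
polynomial; this holds even at `t = 0`, where `1 / 0 = 0` makes both sides `3/2`. -/
theorem fSymARAP3_diag (t : ℝ) : fSymARAP3 t t t = (3/2) * (1 - t)^2 * (1 + t) := by
  rcases eq_or_ne t 0 with rfl | ht
  · norm_num [fSymARAP3]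
  · unfold fSymARAP3
    field_simp
    ring

theorem continuous_fSymARAP3_diag : Continuous fun t : ℝ => fSymARAP3 t t t := by
  simp only [fSymARAP3_diag]
  fun_prop

/-- Along the diagonal the symmetrized ARAP energy remains
bounded as the singular values approach zero:
`f^Sym_ARAP(t,t,t) = (3/2)(1 − t)²(1 + t)` for `t > 0`, so it tends to the
finite limit `3/2` as `t → 0⁺`. -/
theorem statement_17 :
    (∀ t : ℝ, 0 < t → fSymARAP3 t t t = (3/2) * (1 - t)^2 * (1 + t)) ∧
    Filter.Tendsto (fun t : ℝ => fSymARAP3 t t t)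
      (nhdsWithin 0 (Set.Ioi 0)) (nhds (3/2)) := by
  refine ⟨fun t _ => fSymARAP3_diag t, tendsto_nhdsWithin_of_tendsto_nhds ?_⟩
  have h := continuous_fSymARAP3_diag.tendsto 0
  rwa [fSymARAP3_diag, show (3/2 : ℝ) * (1 - 0)^2 * (1 + 0) = 3/2 by norm_num] at h
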